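/- Let Y be a Banach space, Q a norm-one continuous k-homogeneous polynomial from a Banach space X to Y, and 0 ≤ α ≤ 1. Suppose for every ε > 0 there exists T_ε ∈ L(Y) with classical numerical radius v(T_ε) ≤ α and ‖T_ε ∘ Q‖ > 1 − ε. Then n_Q^{(k)}(X, Y) ≤ α. -/

import Mathlib

/-! If every exact state `(y, f)` (`‖y‖ = ‖f‖ = f y = 1`) satisfies `Re f (S y) ≤ μ`, then a
weak-* cluster point of norming functionals of `u + t • S u` (`t → 0⁺`) is an exact state at
`u / ‖u‖`, so the right derivative of `t ↦ ‖u + t • S u‖` at `0` is at most `μ ‖u‖`. Grönwall's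
inequality turns this pointwise bound into `‖exp (t • S)‖ ≤ exp (μ t)`, and since
`y + t • S y = exp (t • S) y + o(t)` uniformly in `‖y‖ ≤ 1`, also approximate states
(`Re f y > 1 - δ`) satisfy `Re f (S y) ≤ μ + ε`. Rotating `T` by a unimodular scalar gives
`|f (T y)| ≤ v(T) + ε` on approximate states. For `P = T ∘ Q / ‖T ∘ Q‖`, a norm-one
`k`-homogeneous polynomial, this yields `n_Q(X, Y) ≤ v_Q(P) ≤ (α + ε) / (1 - ε)`; let `ε → 0`. -/

noncomputable section

/-- `P : X → Y` is a continuous `k`-homogeneous polynomial: it is given by a continuous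
`k`-linear map evaluated on the diagonal. -/
def IsHomPoly (𝕜 : Type*) [RCLike 𝕜] {X Y : Type*} [NormedAddCommGroup X] [NormedSpace 𝕜 X]
    [NormedAddCommGroup Y] [NormedSpace 𝕜 Y] (k : ℕ) (P : X → Y) : Prop :=
  ∃ A : ContinuousMultilinearMap 𝕜 (fun _ : Fin k => X) Y, ∀ x, P x = A (fun _ => x)

/-- The norm of a polynomial: the supremum of `‖P x‖` over the closed unit ball. -/
def polyNorm {X Y : Type*} [NormedAddCommGroup X] [NormedAddCommGroup Y] (P : X → Y) : ℝ :=
  sSup { r : ℝ | ∃ x : X, ‖x‖ ≤ 1 ∧ r = ‖P x‖ }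

/-- `v_{Q,δ}(P)`. -/
def vQdelta (𝕜 : Type*) [RCLike 𝕜] {X Y : Type*} [NormedAddCommGroup X] [NormedSpace 𝕜 X]
    [NormedAddCommGroup Y] [NormedSpace 𝕜 Y] (Q P : X → Y) (δ : ℝ) : ℝ :=
  sSup { r : ℝ | ∃ (x : X) (f : Y →L[𝕜] 𝕜), ‖x‖ = 1 ∧ ‖f‖ = 1 ∧
    1 - δ < RCLike.re (f (Q x)) ∧ r = ‖f (P x)‖ }

/-- The numerical radius of `P` with respect to `Q`, as `inf_{δ>0} v_{Q,δ}(P)`. -/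
def numRad (𝕜 : Type*) [RCLike 𝕜] {X Y : Type*} [NormedAddCommGroup X] [NormedSpace 𝕜 X]
    [NormedAddCommGroup Y] [NormedSpace 𝕜 Y] (Q P : X → Y) : ℝ :=
  sInf { r : ℝ | ∃ δ : ℝ, 0 < δ ∧ r = vQdelta 𝕜 Q P δ }

/-- The approximated spatial numerical range `V_Q(P)`. -/
def VQ (𝕜 : Type*) [RCLike 𝕜] {X Y : Type*} [NormedAddCommGroup X] [NormedSpace 𝕜 X]
    [NormedAddCommGroup Y] [NormedSpace 𝕜 Y] (Q P : X → Y) : Set 𝕜 :=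
  ⋂ δ ∈ Set.Ioi (0 : ℝ), closure { z : 𝕜 | ∃ (x : X) (f : Y →L[𝕜] 𝕜), ‖x‖ = 1 ∧ ‖f‖ = 1 ∧
    1 - δ < RCLike.re (f (Q x)) ∧ z = f (P x) }

/-- The polynomial numerical index `n_Q^{(k)}(X,Y)`. -/
def polyIndex (𝕜 : Type*) [RCLike 𝕜] {X Y : Type*} [NormedAddCommGroup X] [NormedSpace 𝕜 X]
    [NormedAddCommGroup Y] [NormedSpace 𝕜 Y] (k : ℕ) (Q : X → Y) : ℝ :=
  sInf { r : ℝ | ∃ P : X → Y, IsHomPoly 𝕜 k P ∧ polyNorm P = 1 ∧ r = numRad 𝕜 Q P }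

/-- The classical numerical radius of a bounded linear operator. -/
def numRadOp (𝕜 : Type*) [RCLike 𝕜] {Y : Type*} [NormedAddCommGroup Y] [NormedSpace 𝕜 Y]
    (T : Y →L[𝕜] Y) : ℝ :=
  sSup { r : ℝ | ∃ (y : Y) (f : Y →L[𝕜] 𝕜), ‖y‖ = 1 ∧ ‖f‖ = 1 ∧ f y = 1 ∧ r = ‖f (T y)‖ }

end

open NormedSpace Filter Topology Set RCLike

-- `NormedSpace.exp` and its lemmas require a `ℚ`-algebra structure, which Mathlib does not
-- provide on `Y →L[𝕜] Y`.
noncomputable instance ContinuousLinearMap.normedAlgebraRat {𝕜 : Type*} [RCLike 𝕜] {Y : Type*}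
    [NormedAddCommGroup Y] [NormedSpace 𝕜 Y] : NormedAlgebra ℚ (Y →L[𝕜] Y) :=
  NormedAlgebra.restrictScalars ℚ 𝕜 _

section NormingFunctional

variable {𝕜 : Type*} [RCLike 𝕜] {E : Type*} [NormedAddCommGroup E] [NormedSpace 𝕜 E]

lemma exists_norming_le_re_of_eventually_le_norm_add_smul {u w : E} {r : ℝ}
    (h : ∀ᶠ t : ℝ in 𝓝[>] 0, ‖u‖ + t * r ≤ ‖u + (t : 𝕜) • w‖) :
    ∃ g : E →L[𝕜] 𝕜, ‖g‖ ≤ 1 ∧ g u = (‖u‖ : 𝕜) ∧ r ≤ re (g w) := by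
  choose f hf_norm hf_apply using fun t : ℝ => exists_dual_vector'' 𝕜 (u + (t : 𝕜) • w)
  have hf_split (t : ℝ) : re (f t u) + t * re (f t w) = ‖u + (t : 𝕜) • w‖ := by
    simpa [hf_apply] using congrArg re (map_add (f t) u ((t : 𝕜) • w)).symm
  have hf_le (t : ℝ) (v : E) : re (f t v) ≤ ‖v‖ :=
    (RCLike.re_le_norm _).trans ((f t).le_of_opNorm_le (hf_norm t) v |>.trans_eq (one_mul _))
  have hre_w : ∀ᶠ t : ℝ in 𝓝[>] 0, r ≤ re (f t w) := by
    filter_upwards [h, self_mem_nhdsWithin] with t ht (ht0 : 0 < t)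
    nlinarith [hf_split t, hf_le t u]
  have hre_u (ε : ℝ) (hε : 0 < ε) : ∀ᶠ t : ℝ in 𝓝[>] 0, ‖u‖ - ε ≤ re (f t u) := by
    filter_upwards [Ioo_mem_nhdsGT (show 0 < ε / (2 * ‖w‖ + 1) by positivity)] with t ⟨ht0, htε⟩
    have htw : ‖u‖ ≤ ‖u + (t : 𝕜) • w‖ + t * ‖w‖ := by
      simpa [norm_smul, abs_of_pos ht0] using norm_sub_le (u + (t : 𝕜) • w) ((t : 𝕜) • w)
    have hεt : t * (2 * ‖w‖ + 1) < ε := (lt_div_iff₀ (by positivity)).1 htε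
    nlinarith [hf_split t, hf_le t w, norm_nonneg w]
  obtain ⟨φ, hφ_ball, hφ⟩ := (WeakDual.isCompact_closedBall (𝕜 := 𝕜) (E := E) 0 1).exists_clusterPt
    (f := map (fun t => StrongDual.toWeakDual (f t)) (𝓝[>] 0))
    (le_principal_iff.2 (mem_map.2 (univ_mem' fun t => by simpa using hf_norm t)))
  have hφ_mem {C : Set (WeakDual 𝕜 E)} (hC : IsClosed C)
      (hev : ∀ᶠ t : ℝ in 𝓝[>] 0, StrongDual.toWeakDual (f t) ∈ C) : φ ∈ C :=
    hC.closure_eq ▸ hφ.mem_closure_of_mem C hev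
  have hcont_re (v : E) : Continuous fun ψ : WeakDual 𝕜 E => re (ψ v) :=
    RCLike.continuous_re.comp (WeakDual.eval_continuous v)
  have hφ_w : r ≤ re (φ w) := hφ_mem (isClosed_le continuous_const (hcont_re w)) hre_w
  have hφ_u : ‖u‖ ≤ re (φ u) := le_of_forall_pos_le_add fun ε hε =>
    sub_le_iff_le_add.1 (hφ_mem (isClosed_le continuous_const (hcont_re u)) (hre_u ε hε))
  have hφ_norm : ‖WeakDual.toStrongDual φ‖ ≤ 1 := by simpa using hφ_ball
  refine ⟨WeakDual.toStrongDual φ, hφ_norm, ?_, hφ_w⟩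
  have hle : ‖φ u‖ ≤ ‖u‖ :=
    (WeakDual.toStrongDual φ).le_of_opNorm_le hφ_norm u |>.trans_eq (one_mul _)
  have hφ_eq : ‖φ u‖ = ‖u‖ := le_antisymm hle (hφ_u.trans (RCLike.re_le_norm _))
  exact (RCLike.norm_le_re_iff_eq_norm.1 (hφ_eq.trans_le hφ_u)).trans (congrArg _ hφ_eq)

end NormingFunctional

lemma eventually_norm_exp_sub_one_sub_le (𝕂 : Type*) [RCLike 𝕂] {𝔸 : Type*} [NormedRing 𝔸]
    [NormedAlgebra 𝕂 𝔸] [CompleteSpace 𝔸] {c : ℝ} (hc : 0 < c) :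
    ∀ᶠ A in 𝓝 (0 : 𝔸), ‖exp A - 1 - A‖ ≤ c * ‖A‖ := by
  simpa using (hasFDerivAt_exp_zero (𝕂 := 𝕂) (𝔸 := 𝔸)).isLittleO.def hc

lemma eventually_exp_mul_le (μ : ℝ) {η : ℝ} (hη : 0 < η) :
    ∀ᶠ t : ℝ in 𝓝[>] 0, Real.exp (μ * t) ≤ 1 + t * (μ + η) := by
  have hd : HasDerivAt (fun t => Real.exp (μ * t)) μ 0 := by
    simpa using ((hasDerivAt_id (0 : ℝ)).const_mul μ).exp
  filter_upwards [hd.hasDerivWithinAt.limsup_slope_le' (s := Ioi 0) self_notMem_Ioi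
    (lt_add_of_pos_right μ hη), self_mem_nhdsWithin] with t ht (ht0 : 0 < t)
  rw [slope_def_field, mul_zero, Real.exp_zero, sub_zero, div_lt_iff₀ ht0] at ht
  linarith

section ExactStates

variable {𝕜 : Type*} [RCLike 𝕜] {Y : Type*} [NormedAddCommGroup Y] [NormedSpace 𝕜 Y]
  {S : Y →L[𝕜] Y} {μ : ℝ}

lemma frequently_norm_add_smul_apply_lt
    (hS : ∀ (y : Y) (f : Y →L[𝕜] 𝕜), ‖y‖ = 1 → ‖f‖ = 1 → f y = 1 → re (f (S y)) ≤ μ)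
    (u : Y) {r : ℝ} (hr : μ * ‖u‖ < r) :
    ∃ᶠ t : ℝ in 𝓝[>] 0, ‖u + (t : 𝕜) • S u‖ < ‖u‖ + t * r := by
  by_contra h
  obtain ⟨g, hg_norm, hg_u, hg_Su⟩ := exists_norming_le_re_of_eventually_le_norm_add_smul
    ((not_frequently.1 h).mono fun t ht => not_lt.1 ht)
  rcases eq_or_ne u 0 with rfl | hu
  · simp only [map_zero, norm_zero, mul_zero] at hg_Su hr
    linarith
  have hu_pos : 0 < ‖u‖ := norm_pos_iff.2 hu
  set v : Y := ((‖u‖⁻¹ : ℝ) : 𝕜) • u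
  have hv : ‖v‖ = 1 := by simp [v, norm_smul, hu_pos.ne']
  have hgv : g v = 1 := by simp [v, hg_u, hu_pos.ne']
  have hg : ‖g‖ = 1 := le_antisymm hg_norm (by simpa [hgv, hv] using g.le_opNorm v)
  have hSv := hS v g hv hg hgv
  simp only [v, map_smul, smul_eq_mul, RCLike.re_ofReal_mul, inv_mul_le_iff₀ hu_pos] at hSv
  linarith

lemma exp_add_smul_apply [CompleteSpace Y] (x t : ℝ) (y : Y) :
    exp (((x + t : ℝ) : 𝕜) • S) y = exp ((t : 𝕜) • S) (exp ((x : 𝕜) • S) y) := by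
  rw [RCLike.ofReal_add, add_smul, add_comm, exp_add_of_commute
    (((Commute.refl S).smul_left _).smul_right _)]
  rfl

lemma frequently_slope_norm_exp_smul_apply_lt [CompleteSpace Y]
    (hS : ∀ (y : Y) (f : Y →L[𝕜] 𝕜), ‖y‖ = 1 → ‖f‖ = 1 → f y = 1 → re (f (S y)) ≤ μ)
    (y : Y) (x : ℝ) {r : ℝ} (hr : μ * ‖exp ((x : 𝕜) • S) y‖ < r) :
    ∃ᶠ z in 𝓝[>] x, (z - x)⁻¹ * (‖exp ((z : 𝕜) • S) y‖ - ‖exp ((x : 𝕜) • S) y‖) < r := by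
  set u := exp ((x : 𝕜) • S) y
  obtain ⟨r', hr', hr'r⟩ := exists_between hr
  have hpath : Tendsto (fun t : ℝ => (t : 𝕜) • S) (𝓝[>] 0) (𝓝 0) := by
    refine tendsto_nhdsWithin_of_tendsto_nhds ?_
    have : Continuous fun t : ℝ => (t : 𝕜) • S := by fun_prop
    simpa using this.tendsto 0
  have hrem : ∀ᶠ t : ℝ in 𝓝[>] 0, ‖exp ((t : 𝕜) • S) - 1 - (t : 𝕜) • S‖ * ‖u‖ ≤ t * (r - r') := by
    have hc : 0 < (r - r') / (‖S‖ * ‖u‖ + 1) := div_pos (sub_pos.2 hr'r) (by positivity)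
    filter_upwards [hpath.eventually (eventually_norm_exp_sub_one_sub_le 𝕜 hc),
      self_mem_nhdsWithin] with t ht (ht0 : 0 < t)
    rw [norm_smul, RCLike.norm_ofReal, abs_of_pos ht0] at ht
    have hcS : (r - r') / (‖S‖ * ‖u‖ + 1) * (‖S‖ * ‖u‖) ≤ r - r' := by
      rw [div_mul_eq_mul_div, div_le_iff₀ (by positivity)]
      exact mul_le_mul_of_nonneg_left (le_add_of_nonneg_right zero_le_one) (sub_pos.2 hr'r).le
    calc _ ≤ (r - r') / (‖S‖ * ‖u‖ + 1) * (t * ‖S‖) * ‖u‖ := by gcongr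
      _ = t * ((r - r') / (‖S‖ * ‖u‖ + 1) * (‖S‖ * ‖u‖)) := by ring
      _ ≤ t * (r - r') := by gcongr
  have hstep : ∃ᶠ t : ℝ in 𝓝[>] 0, 0 < t ∧ ‖exp ((t : 𝕜) • S) u‖ - ‖u‖ < t * r := by
    refine ((frequently_norm_add_smul_apply_lt hS u hr').and_eventually
      (hrem.and self_mem_nhdsWithin)).mono ?_
    rintro t ⟨hlin, hrem, ht0 : 0 < t⟩
    have hsplit : exp ((t : 𝕜) • S) u
        = (u + (t : 𝕜) • S u) + (exp ((t : 𝕜) • S) - 1 - (t : 𝕜) • S) u := by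
      simp only [sub_apply, one_apply_eq_self, smul_apply, add_add_sub_cancel, add_sub_cancel]
    refine ⟨ht0, ?_⟩
    calc ‖exp ((t : 𝕜) • S) u‖ - ‖u‖
        ≤ ‖u + (t : 𝕜) • S u‖ + ‖exp ((t : 𝕜) • S) - 1 - (t : 𝕜) • S‖ * ‖u‖ - ‖u‖ := by
          rw [hsplit]
          gcongr
          exact (norm_add_le _ _).trans (by gcongr; exact ContinuousLinearMap.le_opNorm _ _)
      _ < t * r' + t * (r - r') := by linarith
      _ = t * r := by ring
  have hshift : Tendsto (x + ·) (𝓝[>] 0) (𝓝[>] x) := by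
    refine tendsto_nhdsWithin_iff.2 ⟨tendsto_nhdsWithin_of_tendsto_nhds ?_, ?_⟩
    · simpa using (continuous_const_add x).tendsto 0
    · filter_upwards [self_mem_nhdsWithin] with t (ht : 0 < t)
      exact lt_add_of_pos_right x ht
  refine hshift.frequently (hstep.mono fun t ⟨ht0, ht⟩ => ?_)
  rwa [add_sub_cancel_left, exp_add_smul_apply, inv_mul_lt_iff₀ ht0]

lemma norm_exp_smul_apply_le [CompleteSpace Y]
    (hS : ∀ (y : Y) (f : Y →L[𝕜] 𝕜), ‖y‖ = 1 → ‖f‖ = 1 → f y = 1 → re (f (S y)) ≤ μ)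
    (y : Y) {t : ℝ} (ht : 0 ≤ t) :
    ‖exp ((t : 𝕜) • S) y‖ ≤ Real.exp (μ * t) * ‖y‖ := by
  have := le_gronwallBound_of_liminf_deriv_right_le (f := fun s : ℝ => ‖exp ((s : 𝕜) • S) y‖)
    (f' := fun s => μ * ‖exp ((s : 𝕜) • S) y‖) (δ := ‖y‖) (K := μ) (ε := 0) (a := 0) (b := t)
    (by fun_prop) (fun x _ r hr => frequently_slope_norm_exp_smul_apply_lt hS y x hr)
    (by simp [exp_zero]) (fun x _ => (add_zero _).ge) t (right_mem_Icc.2 ht)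
  rwa [sub_zero, gronwallBound_ε0, mul_comm] at this

lemma re_apply_lt_of_one_sub_lt_re [CompleteSpace Y]
    (hS : ∀ (y : Y) (f : Y →L[𝕜] 𝕜), ‖y‖ = 1 → ‖f‖ = 1 → f y = 1 → re (f (S y)) ≤ μ)
    {t η : ℝ} (ht : 0 < t) (hexp : Real.exp (μ * t) ≤ 1 + t * (μ + η))
    (hrem : ‖exp ((t : 𝕜) • S) - 1 - (t : 𝕜) • S‖ ≤ t * η)
    {y : Y} {f : Y →L[𝕜] 𝕜} (hy : ‖y‖ ≤ 1) (hf : ‖f‖ ≤ 1) (hfy : 1 - t * η < re (f y)) :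
    re (f (S y)) < μ + 3 * η := by
  have hsplit : y + (t : 𝕜) • S y
      = exp ((t : 𝕜) • S) y - (exp ((t : 𝕜) • S) - 1 - (t : 𝕜) • S) y := by
    simp only [sub_apply, one_apply_eq_self, smul_apply]
    abel
  have hnorm : ‖y + (t : 𝕜) • S y‖ ≤ 1 + t * (μ + 2 * η) :=
    calc ‖y + (t : 𝕜) • S y‖
        ≤ Real.exp (μ * t) * ‖y‖ + ‖exp ((t : 𝕜) • S) - 1 - (t : 𝕜) • S‖ * ‖y‖ := by
          rw [hsplit]
          exact (norm_sub_le _ _).trans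
            (add_le_add (norm_exp_smul_apply_le hS y ht.le) (ContinuousLinearMap.le_opNorm _ _))
      _ ≤ Real.exp (μ * t) * 1 + t * η * 1 := by gcongr; exact (norm_nonneg _).trans hrem
      _ ≤ 1 + t * (μ + 2 * η) := by linarith
  have hre : re (f (y + (t : 𝕜) • S y)) = re (f y) + t * re (f (S y)) := by simp
  have hre_le : re (f (y + (t : 𝕜) • S y)) ≤ ‖y + (t : 𝕜) • S y‖ :=
    (re_le_norm _).trans (f.le_of_opNorm_le hf _ |>.trans_eq (one_mul _))
  nlinarith

end ExactStates

lemma norm_apply_le_numRadOp {𝕜 : Type*} [RCLike 𝕜] {Y : Type*} [NormedAddCommGroup Y]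
    [NormedSpace 𝕜 Y] (T : Y →L[𝕜] Y) {y : Y} {f : Y →L[𝕜] 𝕜} (hy : ‖y‖ = 1)
    (hf : ‖f‖ = 1) (hfy : f y = 1) : ‖f (T y)‖ ≤ numRadOp 𝕜 T := by
  refine le_csSup ⟨‖T‖, ?_⟩ ⟨y, f, hy, hf, hfy, rfl⟩
  rintro _ ⟨y', f', hy', hf', -, rfl⟩
  calc ‖f' (T y')‖ ≤ ‖f'‖ * (‖T‖ * ‖y'‖) :=
        (f'.le_opNorm _).trans (by gcongr; exact T.le_opNorm _)
    _ = ‖T‖ := by rw [hf', hy', one_mul, mul_one]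

lemma exists_pos_norm_apply_le_of_one_sub_lt_re {𝕜 : Type*} [RCLike 𝕜] {Y : Type*}
    [NormedAddCommGroup Y] [NormedSpace 𝕜 Y] [CompleteSpace Y] (T : Y →L[𝕜] Y) {μ : ℝ}
    (hT : ∀ (y : Y) (f : Y →L[𝕜] 𝕜), ‖y‖ = 1 → ‖f‖ = 1 → f y = 1 → ‖f (T y)‖ ≤ μ)
    {ε : ℝ} (hε : 0 < ε) :
    ∃ δ > 0, ∀ (y : Y) (f : Y →L[𝕜] 𝕜), ‖y‖ ≤ 1 → ‖f‖ ≤ 1 → 1 - δ < re (f y) →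
      ‖f (T y)‖ ≤ μ + ε := by
  set η := ε / 3 with hη_def
  have hη : 0 < η := by positivity
  obtain ⟨ρ, hρ, hrem⟩ := Metric.eventually_nhds_iff.1
    (eventually_norm_exp_sub_one_sub_le 𝕜 (𝔸 := Y →L[𝕜] Y)
      (show 0 < η / (‖T‖ + 1) by positivity))
  have hsmall : ∀ᶠ t : ℝ in 𝓝[>] 0, t * ‖T‖ < ρ := by
    have : Continuous fun t : ℝ => t * ‖T‖ := by fun_prop
    exact tendsto_nhdsWithin_of_tendsto_nhds (by simpa using this.tendsto 0) |>.eventually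
      (gt_mem_nhds hρ)
  obtain ⟨t, ⟨hexp, hsmall_t⟩, ht : 0 < t⟩ :=
    ((eventually_exp_mul_le μ hη).and hsmall |>.and self_mem_nhdsWithin).exists
  refine ⟨t * η, by positivity, fun y f hy hf hfy => ?_⟩
  -- rotate `T` so that `f ((θ • T) y) = ‖f (T y)‖` is real
  obtain ⟨θ, hθ, hθz⟩ := RCLike.exists_norm_eq_mul_self (f (T y))
  have hS (y' : Y) (f' : Y →L[𝕜] 𝕜) (h₁ : ‖y'‖ = 1) (h₂ : ‖f'‖ = 1) (h₃ : f' y' = 1) :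
      re (f' ((θ • T) y')) ≤ μ :=
    calc re (f' ((θ • T) y')) ≤ ‖f' ((θ • T) y')‖ := re_le_norm _
      _ = ‖f' (T y')‖ := by simp [hθ]
      _ ≤ μ := hT y' f' h₁ h₂ h₃
  have hrem_t : ‖exp ((t : 𝕜) • θ • T) - 1 - (t : 𝕜) • θ • T‖ ≤ t * η := by
    have hnorm : ‖(t : 𝕜) • θ • T‖ = t * ‖T‖ := by simp [norm_smul, hθ, abs_of_pos ht]
    refine (hrem (by simpa [hnorm] using hsmall_t)).trans ?_
    rw [hnorm, div_mul_eq_mul_div, div_le_iff₀ (by positivity)]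
    nlinarith [norm_nonneg T]
  have := re_apply_lt_of_one_sub_lt_re hS ht hexp hrem_t hy hf hfy
  rw [smul_apply, map_smul, smul_eq_mul, ← hθz, ofReal_re] at this
  linarith [hη_def]

lemma polyNorm_smul {𝕜 : Type*} [RCLike 𝕜] {X Y : Type*} [NormedAddCommGroup X]
    [NormedAddCommGroup Y] [NormedSpace 𝕜 Y] (a : 𝕜) (P : X → Y) :
    polyNorm (fun x => a • P x) = ‖a‖ * polyNorm P := by
  rw [polyNorm, polyNorm, ← smul_eq_mul, ← Real.sSup_smul_of_nonneg (norm_nonneg a)]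
  congr 1
  ext r
  simp [Set.mem_smul_set, norm_smul, eq_comm]

section Polynomial

variable {𝕜 : Type*} [RCLike 𝕜] {X Y : Type*} [NormedAddCommGroup X] [NormedSpace 𝕜 X]
  [NormedAddCommGroup Y] [NormedSpace 𝕜 Y] {k : ℕ}

lemma IsHomPoly.norm_le_polyNorm {P : X → Y} (hP : IsHomPoly 𝕜 k P) {x : X} (hx : ‖x‖ ≤ 1) :
    ‖P x‖ ≤ polyNorm P := by
  obtain ⟨A, hA⟩ := hP
  refine le_csSup ⟨‖A‖, ?_⟩ ⟨x, hx, rfl⟩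
  rintro _ ⟨x', hx', rfl⟩
  rw [hA]
  exact (A.le_opNorm _).trans (mul_le_of_le_one_right (norm_nonneg A)
    (Finset.prod_le_one (fun _ _ => norm_nonneg x') fun _ _ => hx'))

lemma IsHomPoly.clm_comp {Z : Type*} [NormedAddCommGroup Z] [NormedSpace 𝕜 Z] {P : X → Y}
    (hP : IsHomPoly 𝕜 k P) (T : Y →L[𝕜] Z) : IsHomPoly 𝕜 k fun x => T (P x) := by
  obtain ⟨A, hA⟩ := hP
  exact ⟨T.compContinuousMultilinearMap A, fun x => by simp [hA]⟩

lemma vQdelta_nonneg {Q P : X → Y} {δ : ℝ} : 0 ≤ vQdelta 𝕜 Q P δ :=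
  Real.sSup_nonneg (by rintro _ ⟨x, f, -, -, -, rfl⟩; positivity)

lemma vQdelta_le {Q P : X → Y} {δ B : ℝ} (hB : 0 ≤ B)
    (h : ∀ (x : X) (f : Y →L[𝕜] 𝕜), ‖x‖ = 1 → ‖f‖ = 1 → 1 - δ < re (f (Q x)) →
      ‖f (P x)‖ ≤ B) :
    vQdelta 𝕜 Q P δ ≤ B :=
  Real.sSup_le (by rintro _ ⟨x, f, hx, hf, hQx, rfl⟩; exact h x f hx hf hQx) hB

lemma numRad_nonneg {Q P : X → Y} : 0 ≤ numRad 𝕜 Q P :=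
  Real.sInf_nonneg (by rintro _ ⟨δ, -, rfl⟩; exact vQdelta_nonneg)

lemma polyIndex_le_vQdelta {Q P : X → Y} {δ : ℝ} (hP : IsHomPoly 𝕜 k P) (hP1 : polyNorm P = 1)
    (hδ : 0 < δ) : polyIndex 𝕜 k Q ≤ vQdelta 𝕜 Q P δ :=
  calc polyIndex 𝕜 k Q ≤ numRad 𝕜 Q P :=
        csInf_le ⟨0, by rintro _ ⟨P', -, -, rfl⟩; exact numRad_nonneg⟩ ⟨P, hP, hP1, rfl⟩
    _ ≤ vQdelta 𝕜 Q P δ :=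
        csInf_le ⟨0, by rintro _ ⟨δ', -, rfl⟩; exact vQdelta_nonneg⟩ ⟨δ, hδ, rfl⟩

end Polynomial

theorem stmt_19_general (𝕜 : Type*) [RCLike 𝕜] (X Y : Type*) [NormedAddCommGroup X] [NormedSpace 𝕜 X]
    [NormedAddCommGroup Y] [NormedSpace 𝕜 Y] [CompleteSpace Y]
    (k : ℕ) (Q : X → Y) (hQ : IsHomPoly 𝕜 k Q) (hQ1 : polyNorm Q = 1)
    (α : ℝ) (hα0 : 0 ≤ α)
    (hT : ∀ ε : ℝ, 0 < ε → ∃ T : Y →L[𝕜] Y, numRadOp 𝕜 T ≤ α ∧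
      1 - ε < polyNorm (fun x => T (Q x))) :
    polyIndex 𝕜 k Q ≤ α := by
  have hlim : Tendsto (fun ε : ℝ => (α + ε) / (1 - ε)) (𝓝[>] 0) (𝓝 α) := by
    have : ContinuousAt (fun ε : ℝ => (α + ε) / (1 - ε)) 0 := by fun_prop (disch := norm_num)
    simpa using this.tendsto.mono_left nhdsWithin_le_nhds
  refine ge_of_tendsto hlim ?_
  filter_upwards [Ioo_mem_nhdsGT one_pos] with ε ⟨hε0, hε1⟩
  obtain ⟨T, hTα, hTQ⟩ := hT ε hε0
  obtain ⟨δ, hδ, hT_approx⟩ := exists_pos_norm_apply_le_of_one_sub_lt_re T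
    (fun y f hy hf hfy => norm_apply_le_numRadOp T hy hf hfy) hε0
  set c := polyNorm fun x => T (Q x)
  have hc : 0 < c := by linarith
  have hP1 : polyNorm (fun x => ((c⁻¹ : ℝ) : 𝕜) • T (Q x)) = 1 := by
    rw [polyNorm_smul, RCLike.norm_ofReal, abs_of_pos (inv_pos.2 hc), inv_mul_cancel₀ hc.ne']
  refine (polyIndex_le_vQdelta (hQ.clm_comp (((c⁻¹ : ℝ) : 𝕜) • T)) hP1 hδ).trans
    (vQdelta_le (div_nonneg (by linarith) (by linarith)) fun x f hx hf hQx => ?_)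
  have hQx1 : ‖Q x‖ ≤ 1 := hQ1 ▸ hQ.norm_le_polyNorm hx.le
  calc ‖f (((c⁻¹ : ℝ) : 𝕜) • T (Q x))‖ = ‖f (T (Q x))‖ / c := by
        simp [abs_of_pos hc, div_eq_inv_mul]
    _ ≤ (α + ε) / (1 - ε) := div_le_div₀ (by linarith)
        ((hT_approx _ f hQx1 hf.le hQx).trans (by linarith)) (by linarith) hTQ.le

theorem stmt_19 (𝕜 : Type*) [RCLike 𝕜] (X Y : Type*) [NormedAddCommGroup X] [NormedSpace 𝕜 X]
    [NormedAddCommGroup Y] [NormedSpace 𝕜 Y] [CompleteSpace X] [CompleteSpace Y]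
    (k : ℕ) (Q : X → Y) (hQ : IsHomPoly 𝕜 k Q) (hQ1 : polyNorm Q = 1)
    (α : ℝ) (hα0 : 0 ≤ α) (hα1 : α ≤ 1)
    (hT : ∀ ε : ℝ, 0 < ε → ∃ T : Y →L[𝕜] Y, numRadOp 𝕜 T ≤ α ∧
      1 - ε < polyNorm (fun x => T (Q x))) :
    polyIndex 𝕜 k Q ≤ α :=
  stmt_19_general 𝕜 X Y k Q hQ hQ1 α hα0 hT
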